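/- arXiv:2604.02862 — 5 statements merged into one kernel-verified Lean document; each statement's English description precedes it below -/
import Mathlib

section
/- Let u : ℝ → ℝ be concave, nondecreasing, differentiable everywhere, satisfying the Inada conditions, and strictly concave on (−∞, a) where a := inf{x : u(x) = sup u}. Define the convex conjugate Φ(y) := sup_{x ∈ ℝ} (u(x) − x y). Then (0, +∞) ⊆ dom(Φ) ⊆ [0, +∞), Φ is bounded from below on ℝ, and Φ is strictly convex on (0, +∞). -/
open Filter Set


lemma tangent_line {u : ℝ → ℝ} (hconc : ConcaveOn ℝ Set.univ u)
    (hdiff : ∀ x : ℝ, DifferentiableAt ℝ u x) (x z : ℝ) :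
    u z ≤ u x + deriv u x * (z - x) := by
  rcases lt_trichotomy z x with h | rfl | h
  · have := hconc.deriv_le_slope (mem_univ z) (mem_univ x) h (hdiff x)
    rw [slope_def_field, le_div_iff₀ (by linarith : (0:ℝ) < x - z)] at this
    nlinarith
  · simp
  · have := hconc.slope_le_deriv (mem_univ x) (mem_univ z) h (hdiff x)
    rw [slope_def_field, div_le_iff₀ (by linarith : (0:ℝ) < z - x)] at this
    nlinarith

lemma exists_attain {u : ℝ → ℝ} (hconc : ConcaveOn ℝ Set.univ u)
    (hdiff : ∀ x : ℝ, DifferentiableAt ℝ u x)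
    (hInada1 : Tendsto (deriv u) atBot atTop)
    (hInada2 : Tendsto (deriv u) atTop (nhds 0))
    {y : ℝ} (hy : 0 < y) :
    ∃ x : ℝ, deriv u x = y ∧ ∀ z : ℝ, u z - z * y ≤ u x - x * y := by
  obtain ⟨X₁, hX₁⟩ := eventually_atBot.mp (hInada1.eventually_gt_atTop y)
  obtain ⟨X₂, hX₂⟩ := eventually_atTop.mp (hInada2.eventually_lt_const hy)
  have hab : min X₁ X₂ ≤ max X₁ X₂ := le_trans (min_le_left _ _) (le_max_left _ _)
  obtain ⟨c, -, hc⟩ := exists_hasDerivWithinAt_eq_of_lt_of_gt hab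
    (fun x _ => ((hdiff x).hasDerivAt).hasDerivWithinAt)
    (hX₁ _ (min_le_left _ _)) (hX₂ _ (le_max_right _ _))
  refine ⟨c, hc, fun z => ?_⟩
  have := tangent_line hconc hdiff c z
  rw [hc] at this; linarith

/-- With `u` concave, nondecreasing, differentiable, satisfying the
Inada conditions and strictly concave on `(-∞, a)` where
`a = inf {x | u x = sup u}` (in `EReal`), the convex conjugate
`Φ(y) = sup_x (u(x) - x y)` (with values in `EReal`) satisfies:
`(0, ∞) ⊆ dom Φ ⊆ [0, ∞)`, `Φ` is bounded below, and `Φ` is strictly convex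
on `(0, ∞)`. -/
theorem stmt1 (u : ℝ → ℝ)
    (hconc : ConcaveOn ℝ Set.univ u)
    (hmono : Monotone u)
    (hdiff : ∀ x : ℝ, DifferentiableAt ℝ u x)
    (hInada1 : Tendsto (deriv u) atBot atTop)
    (hInada2 : Tendsto (deriv u) atTop (nhds 0))
    (a : EReal)
    (ha : a = sInf ((fun x : ℝ => (x : EReal)) '' {x : ℝ | ∀ z : ℝ, u z ≤ u x}))
    (hstrict : StrictConcaveOn ℝ {x : ℝ | (x : EReal) < a} u)
    (Φ : ℝ → EReal)
    (hΦ : Φ = fun y : ℝ => ⨆ x : ℝ, ((u x - x * y : ℝ) : EReal)) :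
    (∀ y : ℝ, 0 < y → Φ y < ⊤) ∧
    (∀ y : ℝ, Φ y < ⊤ → 0 ≤ y) ∧
    (∃ m : ℝ, ∀ y : ℝ, (m : EReal) ≤ Φ y) ∧
    StrictConvexOn ℝ (Set.Ioi (0 : ℝ)) (fun y : ℝ => (Φ y).toReal) := by
  subst hΦ
  -- lower bound: Φ y ≥ u 0
  have hlb : ∀ y : ℝ, ((u 0 : ℝ) : EReal) ≤ ⨆ x : ℝ, ((u x - x * y : ℝ) : EReal) := by
    intro y
    have h00 : ((u 0 - 0 * y : ℝ) : EReal) ≤ ⨆ x : ℝ, ((u x - x * y : ℝ) : EReal) :=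
      le_iSup (fun x : ℝ => ((u x - x * y : ℝ) : EReal)) 0
    simpa using h00
  -- finiteness on (0, ∞)
  have hfin : ∀ y : ℝ, 0 < y → (⨆ x : ℝ, ((u x - x * y : ℝ) : EReal)) < ⊤ := by
    intro y hy
    obtain ⟨x, -, hmax⟩ := exists_attain hconc hdiff hInada1 hInada2 hy
    refine lt_of_le_of_lt (iSup_le fun z => ?_) (EReal.coe_lt_top (u x - x * y))
    exact EReal.coe_le_coe_iff.mpr (hmax z)
  -- for finite y: the value and upper bound on terms
  have hval : ∀ y : ℝ, (⨆ x : ℝ, ((u x - x * y : ℝ) : EReal)) < ⊤ →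
      (∀ z : ℝ, u z - z * y ≤ (⨆ x : ℝ, ((u x - x * y : ℝ) : EReal)).toReal) ∧
      u 0 ≤ (⨆ x : ℝ, ((u x - x * y : ℝ) : EReal)).toReal := by
    intro y hy
    set S := ⨆ x : ℝ, ((u x - x * y : ℝ) : EReal) with hS
    have h0 : ((u 0 : ℝ) : EReal) ≤ S := hS ▸ hlb y
    have hbot : S ≠ ⊥ := fun h => by simp [h] at h0
    have hcoe : ((S.toReal : ℝ) : EReal) = S := EReal.coe_toReal hy.ne hbot
    constructor
    · intro z
      have hz : ((u z - z * y : ℝ) : EReal) ≤ S :=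
        hS ▸ le_iSup (fun x : ℝ => ((u x - x * y : ℝ) : EReal)) z
      rw [← hcoe] at hz
      exact EReal.coe_le_coe_iff.mp hz
    · rw [← hcoe] at h0
      exact EReal.coe_le_coe_iff.mp h0
  refine ⟨hfin, ?_, ⟨u 0, hlb⟩, ?_⟩
  · -- dom Φ ⊆ [0, ∞)
    intro y hy
    by_contra hneg
    push_neg at hneg
    obtain ⟨hub, h0⟩ := hval y hy
    set b := (⨆ x : ℝ, ((u x - x * y : ℝ) : EReal)).toReal
    set x := (b - u 0 + 1) / (-y) with hx
    have hny : 0 < -y := by linarith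
    have hxpos : 0 < x := div_pos (by linarith) hny
    have hux : u 0 ≤ u x := hmono hxpos.le
    have hxy : x * (-y) = b - u 0 + 1 := div_mul_cancel₀ _ hny.ne'
    have := hub x
    nlinarith
  · -- strict convexity
    refine ⟨convex_Ioi 0, fun y₁ h₁ y₂ h₂ hne t s ht hs hts => ?_⟩
    simp only [smul_eq_mul] at *
    have h₁' : (0:ℝ) < y₁ := h₁
    have h₂' : (0:ℝ) < y₂ := h₂
    set y := t * y₁ + s * y₂ with hy
    have hypos : 0 < y := by positivity
    obtain ⟨x, hdx, hmax⟩ := exists_attain hconc hdiff hInada1 hInada2 hypos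
    -- Φ y = u x - x * y
    have hSy : (⨆ z : ℝ, ((u z - z * y : ℝ) : EReal)) = ((u x - x * y : ℝ) : EReal) :=
      le_antisymm (iSup_le fun z => EReal.coe_le_coe_iff.mpr (hmax z)) (le_iSup (fun z : ℝ => ((u z - z * y : ℝ) : EReal)) x)
    obtain ⟨hub₁, -⟩ := hval y₁ (hfin y₁ h₁')
    obtain ⟨hub₂, -⟩ := hval y₂ (hfin y₂ h₂')
    set b₁ := (⨆ z : ℝ, ((u z - z * y₁ : ℝ) : EReal)).toReal
    set b₂ := (⨆ z : ℝ, ((u z - z * y₂ : ℝ) : EReal)).toReal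
    -- at least one strict
    have key : u x - x * y₁ < b₁ ∨ u x - x * y₂ < b₂ := by
      by_contra hcon
      push_neg at hcon
      have he₁ : b₁ ≤ u x - x * y₁ := hcon.1
      have he₂ : b₂ ≤ u x - x * y₂ := hcon.2
      have hm : ∀ i : ℝ, (∀ z : ℝ, u z - z * i ≤ u x - x * i) → deriv u x = i := by
        intro i hi
        have hmax' : IsMaxOn (fun z => u z - z * i) Set.univ x :=
          isMaxOn_iff.mpr fun z _ => hi z
        have hloc : IsLocalMax (fun z => u z - z * i) x := hmax'.isLocalMax univ_mem
        have hd : HasDerivAt (fun z => u z - z * i) (deriv u x - 1 * i) x :=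
          ((hdiff x).hasDerivAt).sub ((hasDerivAt_id x).mul_const i)
        have := hloc.hasDerivAt_eq_zero hd
        linarith [this]
      have e₁ : deriv u x = y₁ := hm y₁ fun z => le_trans (hub₁ z) he₁
      have e₂ : deriv u x = y₂ := hm y₂ fun z => le_trans (hub₂ z) he₂
      exact hne (e₁ ▸ e₂)
    have hfyval : (⨆ z : ℝ, ((u z - z * y : ℝ) : EReal)).toReal = u x - x * y := by
      rw [hSy, EReal.toReal_coe]
    rw [hfyval]
    have e : u x - x * y = t * (u x - x * y₁) + s * (u x - x * y₂) := by
      rw [hy]; linear_combination (-(u x)) * hts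
    have l₁ : u x - x * y₁ ≤ b₁ := hub₁ x
    have l₂ : u x - x * y₂ ≤ b₂ := hub₂ x
    rcases key with hk | hk
    · nlinarith
    · nlinarith
end

section
/- Let u : ℝ → ℝ be concave, nondecreasing, differentiable, satisfying the Inada conditions, and strictly concave on (−∞, a) with a := inf{x : u(x) = sup u}. Let x*(y) denote the unique solution of u'(x) = y for y > 0 and let Φ(y) := sup_x (u(x) − xy). Then Φ is differentiable on (0, ∞) with Φ'(y) = −x*(y), and the map y ↦ x*(y) is continuous and strictly decreasing on (0, ∞). -/
open Filter Set Topology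

/-- With `u` as in the Inada / strict-concavity setup, `xs y` the
unique solution of `u'(x) = y` for `y > 0`, and `Φ(y) = sup_x (u(x) - x y)`,
the conjugate `Φ` is differentiable on `(0, ∞)` with `Φ'(y) = -xs y`, and
`y ↦ xs y` is continuous and strictly decreasing on `(0, ∞)`. -/
theorem stmt2 (u : ℝ → ℝ)
    (hconc : ConcaveOn ℝ Set.univ u)
    (hmono : Monotone u)
    (hdiff : ∀ x : ℝ, DifferentiableAt ℝ u x)
    (hInada1 : Tendsto (deriv u) atBot atTop)
    (hInada2 : Tendsto (deriv u) atTop (nhds 0))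
    (a : EReal)
    (ha : a = sInf ((fun x : ℝ => (x : EReal)) '' {x : ℝ | ∀ z : ℝ, u z ≤ u x}))
    (hstrict : StrictConcaveOn ℝ {x : ℝ | (x : EReal) < a} u)
    (xs : ℝ → ℝ)
    (hxs : ∀ y : ℝ, 0 < y → deriv u (xs y) = y)
    (hxs_uniq : ∀ y : ℝ, 0 < y → ∀ x : ℝ, deriv u x = y → x = xs y)
    (Φ : ℝ → EReal)
    (hΦ : Φ = fun y : ℝ => ⨆ x : ℝ, ((u x - x * y : ℝ) : EReal)) :
    (∀ y ∈ Set.Ioi (0 : ℝ),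
      HasDerivAt (fun z : ℝ => (Φ z).toReal) (-(xs y)) y) ∧
    ContinuousOn xs (Set.Ioi (0 : ℝ)) ∧
    StrictAntiOn xs (Set.Ioi (0 : ℝ)) := by
  -- derivative is antitone
  have hant : Antitone (deriv u) := fun x y hxy =>
    hconc.antitoneOn_deriv (fun z _ => hdiff z) (mem_univ x) (mem_univ y) hxy
  -- tangent line inequality
  have htan : ∀ x₀ x : ℝ, u x ≤ u x₀ + deriv u x₀ * (x - x₀) := by
    intro x₀ x
    rcases lt_trichotomy x x₀ with h | h | h
    · have hs := hconc.deriv_le_slope (mem_univ x) (mem_univ x₀) h (hdiff x₀)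
      rw [slope_def_field] at hs
      have hpos : (0 : ℝ) < x₀ - x := by linarith
      rw [le_div_iff₀ hpos] at hs
      nlinarith
    · simp [h]
    · have hs := hconc.slope_le_deriv (mem_univ x₀) (mem_univ x) h (hdiff x₀)
      rw [slope_def_field] at hs
      have hpos : (0 : ℝ) < x - x₀ := by linarith
      rw [div_le_iff₀ hpos] at hs
      nlinarith
  -- sup is attained at xs y
  have hattain : ∀ y : ℝ, 0 < y → ∀ x : ℝ, u x - x * y ≤ u (xs y) - xs y * y := by
    intro y hy x
    have := htan (xs y) x
    rw [hxs y hy] at this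
    nlinarith
  -- strict comparison lemmas
  have hgt : ∀ y : ℝ, 0 < y → ∀ x : ℝ, x < xs y → y < deriv u x := by
    intro y hy x hx
    have h1 : deriv u (xs y) ≤ deriv u x := hant hx.le
    rw [hxs y hy] at h1
    rcases h1.lt_or_eq with h | h
    · exact h
    · exact absurd (hxs_uniq y hy x h.symm) hx.ne
  have hlt : ∀ y : ℝ, 0 < y → ∀ x : ℝ, xs y < x → deriv u x < y := by
    intro y hy x hx
    have h1 : deriv u x ≤ deriv u (xs y) := hant hx.le
    rw [hxs y hy] at h1
    rcases h1.lt_or_eq with h | h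
    · exact h
    · exact absurd (hxs_uniq y hy x h) hx.ne'
  -- strict antitonicity
  have hanti : StrictAntiOn xs (Set.Ioi (0 : ℝ)) := by
    intro y1 hy1 y2 hy2 h12
    by_contra hcon
    push_neg at hcon
    rcases hcon.lt_or_eq with h | h
    · have := hlt y1 hy1 (xs y2) h
      rw [hxs y2 hy2] at this
      linarith
    · have : y1 = y2 := by
        rw [← hxs y1 hy1, ← hxs y2 hy2, h]
      linarith [h12]
  -- continuity at each point of Ioi 0
  have hcontAt : ∀ y0 : ℝ, 0 < y0 → ContinuousAt xs y0 := by
    intro y0 hy0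
    rw [Metric.continuousAt_iff]
    intro ε hε
    set x0 := xs y0 with hx0
    have h1 : y0 < deriv u (x0 - ε) := hgt y0 hy0 _ (by linarith)
    have h2 : deriv u (x0 + ε) < y0 := hlt y0 hy0 _ (by linarith)
    refine ⟨min (deriv u (x0 - ε) - y0) (min (y0 - deriv u (x0 + ε)) (y0 / 2)),
      lt_min (by linarith) (lt_min (by linarith) (by linarith)), ?_⟩
    intro y hyd
    rw [Real.dist_eq] at hyd ⊢
    have hd1 : |y - y0| < deriv u (x0 - ε) - y0 := lt_of_lt_of_le hyd (min_le_left _ _)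
    have hd2 : |y - y0| < y0 - deriv u (x0 + ε) :=
      lt_of_lt_of_le hyd ((min_le_right _ _).trans (min_le_left _ _))
    have hd3 : |y - y0| < y0 / 2 :=
      lt_of_lt_of_le hyd ((min_le_right _ _).trans (min_le_right _ _))
    rw [abs_lt] at hd1 hd2 hd3
    have hypos : 0 < y := by linarith [hd3.1]
    have hA : x0 - ε < xs y := by
      by_contra h
      push_neg at h
      have := hant h
      rw [hxs y hypos] at this
      linarith [hd1.2]
    have hB : xs y < x0 + ε := by
      by_contra h
      push_neg at h
      have := hant h
      rw [hxs y hypos] at this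
      linarith [hd2.1]
    rw [abs_lt]
    constructor <;> linarith
  have hcont : ContinuousOn xs (Set.Ioi (0 : ℝ)) := fun y hy =>
    (hcontAt y hy).continuousWithinAt
  -- value of Φ on Ioi 0
  have hΦval : ∀ y : ℝ, 0 < y → (Φ y).toReal = u (xs y) - xs y * y := by
    intro y hy
    have : Φ y = ((u (xs y) - xs y * y : ℝ) : EReal) := by
      rw [hΦ]
      apply le_antisymm
      · exact iSup_le fun x => EReal.coe_le_coe_iff.2 (hattain y hy x)
      · exact le_iSup (fun x : ℝ => ((u x - x * y : ℝ) : EReal)) (xs y)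
    rw [this, EReal.toReal_coe]
  refine ⟨?_, hcont, hanti⟩
  intro y0 hy0
  rw [Set.mem_Ioi] at hy0
  set x0 := xs y0 with hx0def
  set h : ℝ → ℝ := fun y => u (xs y) - xs y * y with hdef
  -- h has derivative -x0 at y0
  have hlow : ∀ y : ℝ, 0 < y → -x0 * (y - y0) ≤ h y - h y0 := by
    intro y hy
    have h1 := hattain y hy x0
    have h2 : h y0 = u x0 - x0 * y0 := rfl
    simp only [hdef]
    nlinarith
  have hhigh : ∀ y : ℝ, 0 < y → h y - h y0 ≤ -(xs y) * (y - y0) := by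
    intro y hy
    have h1 := hattain y0 hy0 (xs y)
    simp only [hdef]
    nlinarith
  have hslope : ∀ y : ℝ, 0 < y → y ≠ y0 → |slope h y0 y + x0| ≤ |xs y - x0| := by
    intro y hy hne
    have hd : y - y0 ≠ 0 := sub_ne_zero.2 hne
    have hform : slope h y0 y + x0 = (h y - h y0 + x0 * (y - y0)) / (y - y0) := by
      rw [slope_def_field]
      field_simp
    rw [hform, abs_div]
    rw [div_le_iff₀ (abs_pos.2 hd)]
    have hN0 : 0 ≤ h y - h y0 + x0 * (y - y0) := by
      have := hlow y hy; linarith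
    have hNle : h y - h y0 + x0 * (y - y0) ≤ (x0 - xs y) * (y - y0) := by
      have := hhigh y hy; nlinarith
    calc |h y - h y0 + x0 * (y - y0)| = h y - h y0 + x0 * (y - y0) := abs_of_nonneg hN0
      _ ≤ (x0 - xs y) * (y - y0) := hNle
      _ ≤ |(x0 - xs y) * (y - y0)| := le_abs_self _
      _ = |x0 - xs y| * |y - y0| := abs_mul _ _
      _ = |xs y - x0| * |y - y0| := by rw [abs_sub_comm]
  have hxtend : Tendsto (fun y => |xs y - x0|) (𝓝[≠] y0) (𝓝 0) := by
    have h1 : Tendsto (fun y => |xs y - x0|) (𝓝 y0) (𝓝 |x0 - x0|) :=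
      (((hcontAt y0 hy0).sub tendsto_const_nhds).abs)
    simp only [sub_self, abs_zero] at h1
    exact h1.mono_left nhdsWithin_le_nhds
  have hev : ∀ᶠ y in 𝓝[≠] y0, ‖slope h y0 y + x0‖ ≤ |xs y - x0| := by
    have h1 : ∀ᶠ y in 𝓝[≠] y0, 0 < y :=
      eventually_nhdsWithin_of_eventually_nhds (eventually_gt_nhds hy0)
    filter_upwards [h1, self_mem_nhdsWithin] with y hy hne
    rw [Real.norm_eq_abs]
    exact hslope y hy hne
  have hsq : Tendsto (fun y => slope h y0 y + x0) (𝓝[≠] y0) (𝓝 0) :=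
    squeeze_zero_norm' hev hxtend
  have hslopetend : Tendsto (slope h y0) (𝓝[≠] y0) (𝓝 (-x0)) := by
    have := hsq.add_const (-x0)
    simpa using this
  have hderivh : HasDerivAt h (-x0) y0 := hasDerivAt_iff_tendsto_slope.2 hslopetend
  have heq : (fun z : ℝ => (Φ z).toReal) =ᶠ[𝓝 y0] h := by
    filter_upwards [Ioi_mem_nhds hy0] with z hz
    exact hΦval z hz
  exact hderivh.congr_of_eventuallyEq heq
end

section
/- Let (Ω, F, (F_t)_{t=0,…,T}, P) be a finite discrete-time filtered probability space with F_0 trivial, and S = (S_t) a real-valued local martingale with S_T ≥ 0 a.s. Then S is a (true) martingale; in particular E[S_t] = S_0 for all t. -/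
open MeasureTheory Filter

/-- In finite discrete time with trivial initial σ-algebra, a
real-valued local martingale `S` with `S T ≥ 0` a.s. is a true martingale; in
particular `E[S t] = E[S 0]` for all `t`. -/
theorem stmt9 (Ω : Type*) (m0 : MeasurableSpace Ω) (P : Measure Ω)
    [IsProbabilityMeasure P]
    (𝒢 : Filtration ℕ m0) (T : ℕ)
    (h0 : 𝒢 0 = ⊥)
    (S : ℕ → Ω → ℝ)
    (hadapted : Adapted 𝒢 S)
    (hconst : ∀ t : ℕ, T ≤ t → S t = S T)
    (τ : ℕ → Ω → ℕ)
    (hτ : ∀ n, IsStoppingTime 𝒢 (fun ω => (τ n ω : WithTop ℕ)))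
    (hτmono : ∀ ω, Monotone fun n => τ n ω)
    (hτT : ∀ᵐ ω ∂P, ∃ N : ℕ, ∀ n, N ≤ n → τ n ω = T)
    (hmart : ∀ n, Martingale
      (fun t ω => if 0 < τ n ω then stoppedProcess S (fun ω => (τ n ω : WithTop ℕ)) t ω else 0) 𝒢 P)
    (hpos : ∀ᵐ ω ∂P, 0 ≤ S T ω) :
    Martingale S 𝒢 P ∧ ∀ t : ℕ, ∫ ω, S t ω ∂P = ∫ ω, S 0 ω ∂P := by
  classical
  set M : ℕ → ℕ → Ω → ℝ :=
    fun n t ω => if 0 < τ n ω then stoppedProcess S (fun ω => (τ n ω : WithTop ℕ)) t ω else 0 with hMdef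
  have hmart' : ∀ n, Martingale (M n) 𝒢 P := hmart
  -- basic pointwise identity
  have hMeq : ∀ n t ω, t ≤ τ n ω → 0 < τ n ω → M n t ω = S t ω := by
    intro n t ω h1 h2
    simp only [hMdef, if_pos h2, stoppedProcess, min_eq_left h1]
    rw [min_eq_left (by simpa using h1)]; rfl
  -- S 0 is a constant
  have hΩ : Nonempty Ω := by
    by_contra h
    rw [not_nonempty_iff] at h
    have h1 := measure_univ (μ := P)
    rw [Set.univ_eq_empty_iff.2 h] at h1
    simp at h1
  obtain ⟨c, hc⟩ : ∃ c : ℝ, S 0 = fun _ => c := by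
    have h := hadapted 0
    rw [h0] at h
    exact stronglyMeasurable_bot_iff.1 h.stronglyMeasurable
  -- measurability of the relevant sets
  have hAmeas : ∀ n t, MeasurableSet[𝒢 t] {ω | t < τ n ω} := by
    intro n t
    have h := (hτ n t).compl
    have he : {ω | τ n ω ≤ t}ᶜ = {ω | t < τ n ω} := by
      ext ω; simp [not_le]
    rw [← he]; convert h using 1; ext ω; simp
  -- Step: nonnegativity propagates backwards
  have hstep : ∀ t, t < T → (∀ᵐ ω ∂P, 0 ≤ S (t + 1) ω) → ∀ᵐ ω ∂P, 0 ≤ S t ω := by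
    intro t htT hnext
    have hBn : ∀ n, P ({ω | S t ω < 0} ∩ {ω | t < τ n ω}) = 0 := by
      intro n
      set B := {ω | S t ω < 0} ∩ {ω | t < τ n ω} with hB
      have hBmeas : MeasurableSet[𝒢 t] B :=
        ((hadapted t) measurableSet_Iio).inter (hAmeas n t)
      have hBmeas0 : MeasurableSet B := 𝒢.le t B hBmeas
      by_contra hP
      have hPpos : 0 < P B := zero_lt_iff.2 hP
      have h1 := (hmart' n).setIntegral_eq (Nat.le_succ t) hBmeas
      have e1 : ∫ ω in B, M n t ω ∂P = ∫ ω in B, S t ω ∂P := by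
        refine setIntegral_congr_fun hBmeas0 fun ω hω => ?_
        exact hMeq n t ω (le_of_lt hω.2) (lt_of_le_of_lt (Nat.zero_le t) hω.2)
      have e2 : ∫ ω in B, M n (t + 1) ω ∂P = ∫ ω in B, S (t + 1) ω ∂P := by
        refine setIntegral_congr_fun hBmeas0 fun ω hω => ?_
        exact hMeq n (t + 1) ω hω.2 (lt_of_le_of_lt (Nat.zero_le t) hω.2)
      have hkey : ∫ ω in B, S t ω ∂P = ∫ ω in B, S (t + 1) ω ∂P := by
        rw [← e1, ← e2]; exact h1
      have hge : 0 ≤ ∫ ω in B, S t ω ∂P := by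
        rw [hkey]
        exact integral_nonneg_of_ae (ae_restrict_of_ae hnext)
      have hlt : 0 < ∫ ω in B, (fun ω => -M n t ω) ω ∂P := by
        rw [setIntegral_pos_iff_support_of_nonneg_ae]
        · refine lt_of_lt_of_le hPpos (measure_mono ?_)
          intro ω hω
          refine ⟨?_, hω⟩
          have h2 : M n t ω = S t ω :=
            hMeq n t ω (le_of_lt hω.2) (lt_of_le_of_lt (Nat.zero_le t) hω.2)
          have h3 : S t ω < 0 := hω.1
          simp only [Function.mem_support, h2]
          intro hcontra
          nlinarith
        · refine ae_restrict_of_forall_mem hBmeas0 fun ω hω => ?_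
          have h2 : M n t ω = S t ω :=
            hMeq n t ω (le_of_lt hω.2) (lt_of_le_of_lt (Nat.zero_le t) hω.2)
          have h3 : S t ω < 0 := hω.1
          simp only [Pi.zero_apply, h2]
          linarith
        · exact (((hmart' n).integrable t).neg).integrableOn
      simp only [integral_neg] at hlt
      have h4 : ∫ ω in B, M n t ω ∂P < 0 := by linarith
      rw [e1] at h4
      linarith
    have hBn' : ∀ᵐ ω ∂P, ∀ n, ω ∉ ({ω | S t ω < 0} ∩ {ω | t < τ n ω}) :=
      (ae_all_iff).2 fun n => measure_eq_zero_iff_ae_notMem.1 (hBn n)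
    filter_upwards [hBn', hτT] with ω h1 h2
    by_contra hlt
    push_neg at hlt
    obtain ⟨N, hN⟩ := h2
    refine h1 N ⟨hlt, ?_⟩
    simp only [Set.mem_setOf_eq, hN N le_rfl]
    exact htT
  -- nonnegativity everywhere
  have hSnn : ∀ t, ∀ᵐ ω ∂P, 0 ≤ S t ω := by
    have key : ∀ k, ∀ᵐ ω ∂P, 0 ≤ S (T - k) ω := by
      intro k
      induction k with
      | zero => simpa using hpos
      | succ k ih =>
        rcases le_or_gt T k with h' | h'
        · have h : T - (k + 1) = T - k := by omega
          rwa [h]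
        · refine hstep _ (by omega) ?_
          have h2 : T - (k + 1) + 1 = T - k := by omega
          rwa [h2]
    intro t
    rcases le_or_gt T t with h | h
    · rw [hconst t h]; exact hpos
    · have hk := key (T - t)
      rwa [Nat.sub_sub_self (le_of_lt h)] at hk
  have hSnn' : ∀ᵐ ω ∂P, ∀ s, 0 ≤ S s ω := (ae_all_iff).2 hSnn
  -- integrability
  have hint : ∀ t, Integrable (S t) P := by
    intro t
    rcases Nat.eq_zero_or_pos T with hT | hT
    · subst hT
      have h : S t = fun _ => c := by rw [hconst t (Nat.zero_le t), hc]
      rw [h]; exact integrable_const c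
    · have hlim : ∀ᵐ ω ∂P, Tendsto (fun n => M n t ω) atTop (nhds (S t ω)) := by
        filter_upwards [hτT] with ω hω
        obtain ⟨N, hN⟩ := hω
        refine tendsto_atTop_of_eventually_const (i₀ := N) fun n hn => ?_
        have hτn : τ n ω = T := hN n hn
        rcases le_total t T with h | h
        · exact hMeq n t ω (by omega) (by omega)
        · simp only [hMdef, stoppedProcess, hτn, if_pos hT, min_eq_right h]
          rw [min_eq_right (by simpa using h)]
          change S T ω = S t ω
          rw [hconst t h]
      have hMnn : ∀ n, 0 ≤ᵐ[P] M n t := by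
        intro n
        filter_upwards [hSnn'] with ω hω
        simp only [hMdef, stoppedProcess]
        split
        · exact hω _
        · exact le_refl 0
      have hbound : ∀ n, ∫⁻ ω, ENNReal.ofReal (M n t ω) ∂P ≤ ENNReal.ofReal |c| := by
        intro n
        rw [← ofReal_integral_eq_lintegral_ofReal ((hmart' n).integrable t) (hMnn n)]
        refine ENNReal.ofReal_le_ofReal ?_
        have h0t : ∫ ω, M n t ω ∂P = ∫ ω, M n 0 ω ∂P := by
          have h := (hmart' n).setIntegral_eq (Nat.zero_le t)
            (MeasurableSet.univ : MeasurableSet[𝒢 0] Set.univ)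
          simpa [Measure.restrict_univ] using h.symm
        rw [h0t]
        calc ∫ ω, M n 0 ω ∂P ≤ ∫ _ω, |c| ∂P := by
              refine integral_mono ((hmart' n).integrable 0) (integrable_const |c|) fun ω => ?_
              have hM0 : M n 0 ω = if 0 < τ n ω then c else 0 := by
                simp only [hMdef, stoppedProcess, min_eq_left (Nat.zero_le (τ n ω)), hc]
                rw [min_eq_left (by simp)]
                show (if 0 < τ n ω then S 0 ω else 0) = _
                simp only [hc]
              rw [hM0]
              split
              · exact le_abs_self c
              · exact abs_nonneg c
          _ = |c| := by simp
      have hmeasM : ∀ n, AEMeasurable (fun ω => ENNReal.ofReal (M n t ω)) P := fun n =>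
        ENNReal.measurable_ofReal.comp_aemeasurable ((hmart' n).integrable t).aemeasurable
      have hliminf : ∀ᵐ ω ∂P,
          Filter.atTop.liminf (fun n => ENNReal.ofReal (M n t ω)) = ENNReal.ofReal (S t ω) := by
        filter_upwards [hlim] with ω hω
        exact ((ENNReal.continuous_ofReal.tendsto _).comp hω).liminf_eq
      have h1 : ∫⁻ ω, ENNReal.ofReal (S t ω) ∂P ≤ ENNReal.ofReal |c| :=
        calc ∫⁻ ω, ENNReal.ofReal (S t ω) ∂P
            = ∫⁻ ω, Filter.atTop.liminf (fun n => ENNReal.ofReal (M n t ω)) ∂P :=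
              lintegral_congr_ae (hliminf.mono fun ω h => h.symm)
          _ ≤ Filter.atTop.liminf (fun n => ∫⁻ ω, ENNReal.ofReal (M n t ω) ∂P) :=
              lintegral_liminf_le' hmeasM
          _ ≤ ENNReal.ofReal |c| := liminf_le_of_frequently_le' (Frequently.of_forall hbound)
      refine ⟨((hadapted t).mono (𝒢.le t) le_rfl).aestronglyMeasurable, ?_⟩
      exact (hasFiniteIntegral_iff_ofReal (hSnn t)).2 (lt_of_le_of_lt h1 ENNReal.ofReal_lt_top)
  -- the martingale property
  have hmartS : Martingale S 𝒢 P := by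
    refine martingale_of_setIntegral_eq_succ hadapted.stronglyAdapted hint fun i s hs => ?_
    rcases le_or_gt T i with h | h
    · have h2 : S (i + 1) = S i := by rw [hconst (i + 1) (by omega), hconst i h]
      rw [h2]
    · have hsA : ∀ n, MeasurableSet[𝒢 i] (s ∩ {ω | i < τ n ω}) := fun n => hs.inter (hAmeas n i)
      have hsA0 : ∀ n, MeasurableSet (s ∩ {ω | i < τ n ω}) := fun n => 𝒢.le i _ (hsA n)
      have hs0 : MeasurableSet s := 𝒢.le i s hs
      have hDCT : ∀ f : Ω → ℝ, Integrable f P →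
          Tendsto (fun n => ∫ ω in s ∩ {ω | i < τ n ω}, f ω ∂P) atTop
            (nhds (∫ ω in s, f ω ∂P)) := by
        intro f hf
        have h1 : ∀ n, ∫ ω in s ∩ {ω | i < τ n ω}, f ω ∂P
            = ∫ ω, (s ∩ {ω | i < τ n ω}).indicator f ω ∂P := fun n =>
          (integral_indicator (hsA0 n)).symm
        have h2 : ∫ ω in s, f ω ∂P = ∫ ω, s.indicator f ω ∂P := (integral_indicator hs0).symm
        simp_rw [h1]
        rw [h2]
        refine tendsto_integral_of_dominated_convergence (fun ω => ‖f ω‖)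
          (fun n => hf.aestronglyMeasurable.indicator (hsA0 n)) hf.norm
          (fun n => Eventually.of_forall fun ω => norm_indicator_le_norm_self f ω) ?_
        filter_upwards [hτT] with ω hω
        obtain ⟨N, hN⟩ := hω
        refine tendsto_atTop_of_eventually_const (i₀ := N) fun n hn => ?_
        have hτn : τ n ω = T := hN n hn
        by_cases hωs : ω ∈ s
        · have hmem : ω ∈ s ∩ {ω | i < τ n ω} := ⟨hωs, by simp only [Set.mem_setOf_eq]; omega⟩
          rw [Set.indicator_of_mem hmem, Set.indicator_of_mem hωs]
        · rw [Set.indicator_of_notMem (fun hmem => hωs hmem.1), Set.indicator_of_notMem hωs]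
      have hn : ∀ n, ∫ ω in s ∩ {ω | i < τ n ω}, S i ω ∂P
          = ∫ ω in s ∩ {ω | i < τ n ω}, S (i + 1) ω ∂P := by
        intro n
        have h1 := (hmart' n).setIntegral_eq (Nat.le_succ i) (hsA n)
        have e1 : ∫ ω in s ∩ {ω | i < τ n ω}, M n i ω ∂P
            = ∫ ω in s ∩ {ω | i < τ n ω}, S i ω ∂P :=
          setIntegral_congr_fun (hsA0 n) fun ω hω =>
            hMeq n i ω (le_of_lt hω.2) (lt_of_le_of_lt (Nat.zero_le i) hω.2)
        have e2 : ∫ ω in s ∩ {ω | i < τ n ω}, M n (i + 1) ω ∂P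
            = ∫ ω in s ∩ {ω | i < τ n ω}, S (i + 1) ω ∂P :=
          setIntegral_congr_fun (hsA0 n) fun ω hω =>
            hMeq n (i + 1) ω hω.2 (lt_of_le_of_lt (Nat.zero_le i) hω.2)
        rw [← e1, ← e2]; exact h1
      have ha := hDCT (S i) (hint i)
      have hb := hDCT (S (i + 1)) (hint (i + 1))
      rw [show (fun n => ∫ ω in s ∩ {ω | i < τ n ω}, S (i + 1) ω ∂P)
          = fun n => ∫ ω in s ∩ {ω | i < τ n ω}, S i ω ∂P from
        funext fun n => (hn n).symm] at hb
      exact tendsto_nhds_unique ha hb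
  refine ⟨hmartS, fun t => ?_⟩
  have h := hmartS.setIntegral_eq (Nat.zero_le t)
    (MeasurableSet.univ : MeasurableSet[𝒢 0] Set.univ)
  simpa [Measure.restrict_univ] using h.symm
end

section
/- Let 0 < q₂ < q₁ < 1 and γ₁, γ₂ > 0, and define U(α) := −(1/γ₁)·ln(q₁ e^{−γ₁ α} + 1 − q₁), L(α) := (1/γ₂)·ln(q₂ e^{γ₂ α} + 1 − q₂). Then there exists a unique α* > 0 with U(α*) = L(α*), and for every α ∈ (0, α*) one has 0 < L(α) < U(α). -/
/-!
`U - L` is strictly concave: its derivative is the difference of two exponentially tilted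
Bernoulli probabilities, `q₁ e^{-γ₁α} / (q₁ e^{-γ₁α} + 1 - q₁)` decreasing and
`q₂ e^{γ₂α} / (q₂ e^{γ₂α} + 1 - q₂)` increasing in `α`. It vanishes at `0` with slope
`q₁ - q₂ > 0`, and tends to `-∞` because `U` is bounded while `L(α) ≥ α + log q₂ / γ₂`.
Hence it has exactly one positive zero `α*`, and strict concavity makes it positive on `(0, α*)`.
-/

open Real Set Filter

section StrictConcave

variable {f : ℝ → ℝ}

theorem StrictConcaveOn.pos_of_eq_zero_of_eq_zero {s : Set ℝ} (hf : StrictConcaveOn ℝ s f)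
    {x y z : ℝ} (hx : x ∈ s) (hy : y ∈ s) (hfx : f x = 0) (hfy : f y = 0) (hz : z ∈ Ioo x y) :
    0 < f z := by
  have hxy : x < y := hz.1.trans hz.2
  simpa [hfx, hfy] using
    hf.lt_on_openSegment hx hy hxy.ne ((openSegment_eq_Ioo hxy).symm ▸ hz)

theorem exists_pos_eq_zero_of_deriv_pos_of_tendsto_atBot (hf : ContinuousOn f (Ioi 0))
    (hf0 : f 0 = 0) (hd : 0 < deriv f 0) (hlim : Tendsto f atTop atBot) :
    ∃ c, 0 < c ∧ f c = 0 := by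
  obtain ⟨x, hsign, hx⟩ : ∃ x, SignType.sign (f x) = SignType.sign (x - 0) ∧ 0 < x :=
    (((eventually_nhdsWithin_sign_eq_of_deriv_pos hd hf0).filter_mono nhdsWithin_le_nhds).and
      (self_mem_nhdsWithin (s := Ioi (0 : ℝ)))).exists
  have hfx : 0 < f x := by
    rwa [sub_zero, sign_pos hx, sign_eq_one_iff] at hsign
  obtain ⟨X, hfX, hxX⟩ :=
    ((hlim.eventually (eventually_lt_atBot 0)).and (eventually_gt_atTop x)).exists
  obtain ⟨c, hc, hfc⟩ := intermediate_value_Icc' hxX.le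
    (hf.mono fun t ht => hx.trans_le ht.1) ⟨hfX.le, hfx.le⟩
  exact ⟨c, hx.trans_le hc.1, hfc⟩

theorem StrictConcaveOn.exists_unique_pos_eq_zero (hf : StrictConcaveOn ℝ (Ici 0) f)
    (hf0 : f 0 = 0) (hd : 0 < deriv f 0) (hlim : Tendsto f atTop atBot) :
    ∃ c, (0 < c ∧ f c = 0) ∧ (∀ x, 0 < x → f x = 0 → x = c) ∧
      ∀ x, 0 < x → x < c → 0 < f x := by
  have hcont : ContinuousOn f (Ioi 0) := by
    simpa using hf.concaveOn.continuousOn_interior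
  have hpos : ∀ b, 0 < b → f b = 0 → ∀ x ∈ Ioo 0 b, 0 < f x := fun b hb hfb x hx =>
    hf.pos_of_eq_zero_of_eq_zero self_mem_Ici hb.le hf0 hfb hx
  obtain ⟨c, hc, hfc⟩ := exists_pos_eq_zero_of_deriv_pos_of_tendsto_atBot hcont hf0 hd hlim
  refine ⟨c, ⟨hc, hfc⟩, fun x hx hfx => ?_, fun x hx hxc => hpos c hc hfc x ⟨hx, hxc⟩⟩
  rcases lt_trichotomy x c with h | h | h
  · exact absurd hfx (hpos c hc hfc x ⟨hx, h⟩).ne'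
  · exact h
  · exact absurd hfc (hpos x hx hfx c ⟨hc, h⟩).ne'

end StrictConcave

/-- The moment generating function `t ↦ 𝔼[exp (t X)]` of a Bernoulli(`q`) variable `X`. -/
noncomputable def bernoulliMGF (q t : ℝ) : ℝ := q * exp t + 1 - q

/-- The exponential-utility certainty equivalent of a payoff `α` received with probability `q`,
at risk parameter `γ`: in the theorem `L = expCertEquiv q₂ γ₂` and `U = expCertEquiv q₁ (-γ₁)`. -/
noncomputable def expCertEquiv (q γ α : ℝ) : ℝ := 1 / γ * log (bernoulliMGF q (γ * α))

noncomputable def tiltedProb (q t : ℝ) : ℝ := q * exp t / bernoulliMGF q t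

section Bernoulli

variable {q γ : ℝ}

lemma bernoulliMGF_pos (hq0 : 0 ≤ q) (hq1 : q ≤ 1) (t : ℝ) : 0 < bernoulliMGF q t := by
  rcases hq0.eq_or_lt with rfl | hq0
  · simp [bernoulliMGF]
  · unfold bernoulliMGF
    nlinarith [mul_pos hq0 (exp_pos t)]

lemma hasDerivAt_log_bernoulliMGF (hq0 : 0 ≤ q) (hq1 : q ≤ 1) (t : ℝ) :
    HasDerivAt (fun t => log (bernoulliMGF q t)) (tiltedProb q t) t := by
  have h : HasDerivAt (bernoulliMGF q) (q * exp t) t :=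
    (((hasDerivAt_exp t).const_mul q).add_const 1).sub_const q
  exact h.log (bernoulliMGF_pos hq0 hq1 t).ne'

lemma hasDerivAt_expCertEquiv (hq0 : 0 ≤ q) (hq1 : q ≤ 1) (hγ : γ ≠ 0) (α : ℝ) :
    HasDerivAt (expCertEquiv q γ) (tiltedProb q (γ * α)) α := by
  have h := ((hasDerivAt_log_bernoulliMGF hq0 hq1 (γ * α)).comp α
    ((hasDerivAt_id α).const_mul γ)).const_mul (1 / γ)
  exact h.congr_deriv (by field_simp)

lemma deriv_expCertEquiv (hq0 : 0 ≤ q) (hq1 : q ≤ 1) (hγ : γ ≠ 0) :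
    deriv (expCertEquiv q γ) = fun α => tiltedProb q (γ * α) :=
  funext fun α => (hasDerivAt_expCertEquiv hq0 hq1 hγ α).deriv

lemma continuous_expCertEquiv (hq0 : 0 ≤ q) (hq1 : q ≤ 1) (hγ : γ ≠ 0) :
    Continuous (expCertEquiv q γ) :=
  continuous_iff_continuousAt.2 fun α => (hasDerivAt_expCertEquiv hq0 hq1 hγ α).continuousAt

@[simp] lemma expCertEquiv_zero : expCertEquiv q γ 0 = 0 := by
  simp [expCertEquiv, bernoulliMGF]

@[simp] lemma tiltedProb_zero : tiltedProb q 0 = q := by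
  simp [tiltedProb, bernoulliMGF]

lemma strictMono_tiltedProb (hq0 : 0 < q) (hq1 : q < 1) : StrictMono (tiltedProb q) := by
  intro a b hab
  have hexp := mul_lt_mul_of_pos_left (exp_lt_exp.2 hab) (mul_pos hq0 (sub_pos.2 hq1))
  rw [tiltedProb, tiltedProb, div_lt_div_iff₀ (bernoulliMGF_pos hq0.le hq1.le a)
    (bernoulliMGF_pos hq0.le hq1.le b), bernoulliMGF, bernoulliMGF]
  nlinarith

lemma strictConvexOn_expCertEquiv (hq0 : 0 < q) (hq1 : q < 1) (hγ : 0 < γ) :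
    StrictConvexOn ℝ univ (expCertEquiv q γ) := by
  refine StrictMono.strictConvexOn_univ_of_deriv (continuous_expCertEquiv hq0.le hq1.le hγ.ne') ?_
  rw [deriv_expCertEquiv hq0.le hq1.le hγ.ne']
  exact (strictMono_tiltedProb hq0 hq1).comp (strictMono_mul_left_of_pos hγ)

lemma strictConcaveOn_expCertEquiv (hq0 : 0 < q) (hq1 : q < 1) (hγ : γ < 0) :
    StrictConcaveOn ℝ univ (expCertEquiv q γ) := by
  refine StrictAnti.strictConcaveOn_univ_of_deriv (continuous_expCertEquiv hq0.le hq1.le hγ.ne) ?_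
  rw [deriv_expCertEquiv hq0.le hq1.le hγ.ne]
  exact (strictMono_tiltedProb hq0 hq1).comp_strictAnti (strictAnti_mul_left hγ)

lemma expCertEquiv_pos (hq0 : 0 < q) (hγ : 0 < γ) {α : ℝ} (hα : 0 < α) :
    0 < expCertEquiv q γ α := by
  have h : 1 < bernoulliMGF q (γ * α) := by
    unfold bernoulliMGF
    nlinarith [one_lt_exp_iff.2 (mul_pos hγ hα)]
  exact mul_pos (one_div_pos.2 hγ) (log_pos h)

lemma expCertEquiv_le_of_neg (hq0 : 0 ≤ q) (hq1 : q < 1) (hγ : γ < 0) (α : ℝ) :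
    expCertEquiv q γ α ≤ log (1 - q) / γ := by
  have h : log (1 - q) ≤ log (bernoulliMGF q (γ * α)) :=
    log_le_log (sub_pos.2 hq1) (by unfold bernoulliMGF; nlinarith [exp_pos (γ * α)])
  rw [expCertEquiv, one_div_mul_eq_div]
  exact div_le_div_of_nonpos_of_le hγ.le h

lemma add_log_div_le_expCertEquiv (hq0 : 0 < q) (hq1 : q ≤ 1) (hγ : 0 < γ) (α : ℝ) :
    α + log q / γ ≤ expCertEquiv q γ α := by
  have h : log q + γ * α ≤ log (bernoulliMGF q (γ * α)) := by
    rw [← log_exp (γ * α), ← log_mul hq0.ne' (exp_pos _).ne', log_exp]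
    exact log_le_log (by positivity) (by unfold bernoulliMGF; linarith)
  rw [expCertEquiv, one_div_mul_eq_div, le_div_iff₀ hγ]
  calc (α + log q / γ) * γ = log q + γ * α := by field_simp; ring
    _ ≤ _ := h

end Bernoulli

section Difference

variable {q₁ q₂ γ₁ γ₂ : ℝ}

lemma deriv_expCertEquiv_sub_zero (hq₁0 : 0 ≤ q₁) (hq₁1 : q₁ ≤ 1) (hq₂0 : 0 ≤ q₂) (hq₂1 : q₂ ≤ 1)
    (hγ₁ : γ₁ ≠ 0) (hγ₂ : γ₂ ≠ 0) :
    deriv (fun α => expCertEquiv q₁ γ₁ α - expCertEquiv q₂ γ₂ α) 0 = q₁ - q₂ := by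
  exact ((hasDerivAt_expCertEquiv hq₁0 hq₁1 hγ₁ 0).sub
    (hasDerivAt_expCertEquiv hq₂0 hq₂1 hγ₂ 0)).deriv.trans (by simp)

lemma tendsto_expCertEquiv_sub_atBot (hq₁0 : 0 ≤ q₁) (hq₁1 : q₁ < 1) (hq₂0 : 0 < q₂)
    (hq₂1 : q₂ ≤ 1) (hγ₁ : γ₁ < 0) (hγ₂ : 0 < γ₂) :
    Tendsto (fun α => expCertEquiv q₁ γ₁ α - expCertEquiv q₂ γ₂ α) atTop atBot := by
  refine tendsto_atBot_mono (fun α => ?_) <|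
    tendsto_atBot_add_const_left _ (log (1 - q₁) / γ₁ - log q₂ / γ₂) tendsto_neg_atTop_atBot
  have hU := expCertEquiv_le_of_neg hq₁0 hq₁1 hγ₁ α
  have hL := add_log_div_le_expCertEquiv hq₂0 hq₂1 hγ₂ α
  linarith

end Difference

/-- For `0 < q₂ < q₁ < 1` and `γ₁, γ₂ > 0`, with
`U(α) = -(1/γ₁) ln(q₁ e^{-γ₁ α} + 1 - q₁)` and
`L(α) = (1/γ₂) ln(q₂ e^{γ₂ α} + 1 - q₂)`, there exists a unique `α* > 0` with
`U(α*) = L(α*)`, and for every `α ∈ (0, α*)` one has `0 < L(α) < U(α)`. -/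
theorem stmt17 (q₁ q₂ γ₁ γ₂ : ℝ)
    (hq2 : 0 < q₂) (hq21 : q₂ < q₁) (hq1 : q₁ < 1)
    (hγ1 : 0 < γ₁) (hγ2 : 0 < γ₂)
    (U L : ℝ → ℝ)
    (hU : U = fun α : ℝ => -(1 / γ₁) * Real.log (q₁ * Real.exp (-(γ₁ * α)) + 1 - q₁))
    (hL : L = fun α : ℝ => (1 / γ₂) * Real.log (q₂ * Real.exp (γ₂ * α) + 1 - q₂)) :
    ∃ αstar : ℝ,
      (0 < αstar ∧ U αstar = L αstar) ∧
      (∀ α : ℝ, 0 < α → U α = L α → α = αstar) ∧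
      (∀ α : ℝ, 0 < α → α < αstar → 0 < L α ∧ L α < U α) := by
  have hq₁ : 0 < q₁ := hq2.trans hq21
  have hq₂ : q₂ < 1 := hq21.trans hq1
  have hγ₁ : -γ₁ < 0 := neg_lt_zero.2 hγ1
  obtain rfl : U = expCertEquiv q₁ (-γ₁) := by
    rw [hU]; funext α; simp [expCertEquiv, bernoulliMGF]
  obtain rfl : L = expCertEquiv q₂ γ₂ := hL
  have hconc : StrictConcaveOn ℝ (Ici 0)
      (fun α => expCertEquiv q₁ (-γ₁) α - expCertEquiv q₂ γ₂ α) :=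
    ((strictConcaveOn_expCertEquiv hq₁ hq1 hγ₁).sub
      (strictConvexOn_expCertEquiv hq2 hq₂ hγ2)).subset (subset_univ _) (convex_Ici 0)
  have hd : 0 < deriv (fun α => expCertEquiv q₁ (-γ₁) α - expCertEquiv q₂ γ₂ α) 0 := by
    rw [deriv_expCertEquiv_sub_zero hq₁.le hq1.le hq2.le hq₂.le hγ₁.ne hγ2.ne']
    exact sub_pos.2 hq21
  obtain ⟨c, ⟨hc, hc0⟩, huniq, hpos⟩ := hconc.exists_unique_pos_eq_zero (by simp) hd
    (tendsto_expCertEquiv_sub_atBot hq₁.le hq1 hq2 hq₂.le hγ₁ hγ2)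
  refine ⟨c, ⟨hc, sub_eq_zero.1 hc0⟩, fun α hα h => huniq α hα (sub_eq_zero.2 h),
    fun α hα hαc => ⟨expCertEquiv_pos hq2 hγ2 hα, sub_pos.1 (hpos α hα hαc)⟩⟩
end

section
/- Let (Ω, F, P) be a probability space and û a strict Young function (even, convex, û(0)=0, finite) with lim_{y→∞} û(y)/y = +∞. If (Ω, F, P) supports an unbounded nonnegative integrable random variable, then the Orlicz heart M^û := {X ∈ L⁰ : E[û(αX)] < ∞ for all α > 0} is strictly contained in L¹: there exists X ∈ L¹(P) with X ∉ M^û. -/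
open MeasureTheory Filter

open Topology ENNReal in
/-- Let `û` be a strict Young function (even, convex, `û 0 = 0`,
nonnegative, finite) with superlinear growth `û(y)/y → +∞`. If the probability
space supports an unbounded nonnegative integrable random variable, then the
Orlicz heart `M^û = {X | E[û(αX)] < ∞ for all α > 0}` is strictly contained in
`L¹`: there exists an integrable `X` not in `M^û`. -/
theorem stmt18 (Ω : Type*) [MeasurableSpace Ω] (P : Measure Ω)
    [IsProbabilityMeasure P]
    (uhat : ℝ → ℝ)
    (heven : ∀ x : ℝ, uhat (-x) = uhat x)
    (hconv : ConvexOn ℝ Set.univ uhat)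
    (h0 : uhat 0 = 0)
    (hnonneg : ∀ x : ℝ, 0 ≤ uhat x)
    (hsuper : Tendsto (fun y : ℝ => uhat y / y) atTop atTop)
    (W : Ω → ℝ) (hWmeas : Measurable W) (hWint : Integrable W P)
    (hWnonneg : ∀ ω, 0 ≤ W ω)
    (hWunbdd : ¬ ∃ C : ℝ, ∀ᵐ ω ∂P, W ω ≤ C) :
    ∃ X : Ω → ℝ, Integrable X P ∧
      ∃ α : ℝ, 0 < α ∧ ¬ Integrable (fun ω => uhat (α * X ω)) P := by
  classical
  -- all tails have positive probability
  have hpos : ∀ d : ℝ, P {ω | d < W ω} ≠ 0 := by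
    intro d h
    apply hWunbdd
    refine ⟨d, ?_⟩
    rw [ae_iff]
    convert h using 2
    ext ω; simp [not_le]
  -- tails tend to 0
  have htend : Tendsto (fun n : ℕ => P {ω | (n : ℝ) < W ω}) atTop (𝓝 0) := by
    have h1 : Tendsto (P ∘ fun n : ℕ => {ω | (n : ℝ) < W ω}) atTop
        (𝓝 (P (⋂ n : ℕ, {ω | (n : ℝ) < W ω}))) := by
      apply tendsto_measure_iInter_atTop
      · exact fun n => (measurableSet_lt measurable_const hWmeas).nullMeasurableSet
      · intro m n hmn ω hω
        exact lt_of_le_of_lt ((Nat.cast_le (α := ℝ)).2 hmn) hω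
      · exact ⟨0, measure_ne_top _ _⟩
    have h2 : (⋂ n : ℕ, {ω | (n : ℝ) < W ω}) = ∅ := by
      ext ω; simp only [Set.mem_iInter, Set.mem_setOf_eq, Set.mem_empty_iff_false, iff_false,
        not_forall, not_lt]
      obtain ⟨n, hn⟩ := exists_nat_gt (W ω)
      exact ⟨n, hn.le⟩
    rw [h2, measure_empty] at h1
    exact h1
  have htail : ∀ ε : ℝ≥0∞, 0 < ε → ∀ d : ℝ, ∃ c, d ≤ c ∧ P {ω | c < W ω} < ε := by
    intro ε hε d
    have h1 := htend.eventually_lt_const hε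
    have h2 : ∀ᶠ n : ℕ in atTop, d ≤ (n : ℝ) := by
      obtain ⟨m, hm⟩ := exists_nat_gt d
      filter_upwards [eventually_ge_atTop m] with n hn
      exact hm.le.trans (by exact_mod_cast hn)
    obtain ⟨n, h1, h2⟩ := (h1.and h2).exists
    exact ⟨n, h2, h1⟩
  -- thresholds for superlinearity
  have hRs : ∀ n : ℕ, ∃ R : ℝ, 1 ≤ R ∧ ∀ y, R ≤ y → (2 : ℝ) ^ n ≤ uhat y / y := by
    intro n
    obtain ⟨a, ha⟩ := (hsuper.eventually_ge_atTop ((2 : ℝ) ^ n)).exists_forall_of_atTop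
    exact ⟨max a 1, le_max_right _ _, fun y hy => ha y ((le_max_left _ _).trans hy)⟩
  choose R hR1 hR2 using hRs
  have hRpos : ∀ n, (0 : ℝ) < R n := fun n => lt_of_lt_of_le one_pos (hR1 n)
  set εe : ℕ → ℝ≥0∞ := fun n => ENNReal.ofReal ((1 / 2) ^ n / R n) with hεe
  have hεepos : ∀ n, 0 < εe n := by
    intro n
    exact ENNReal.ofReal_pos.2 (div_pos (pow_pos (by norm_num) n) (hRpos n))
  -- recursive choice of levels
  have key : ∀ (n : ℕ) (d : ℝ), ∃ c, d ≤ c ∧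
      P {ω | c < W ω} < min (P {ω | d < W ω} / 2) (εe n) := by
    intro n d
    apply htail
    refine lt_min ?_ (hεepos n)
    exact ENNReal.div_pos (hpos d) ENNReal.ofNat_ne_top
  choose F hF1 hF2 using key
  set c : ℕ → ℝ := fun n => Nat.rec (F 0 0) (fun k ih => F (k + 1) ih) n with hc
  have hcs : ∀ n, c (n + 1) = F (n + 1) (c n) := fun n => rfl
  set q : ℕ → ℝ≥0∞ := fun n => P {ω | c n < W ω} with hq
  have hq0 : ∀ n, q n ≠ 0 := fun n => hpos _
  have hqtop : ∀ n, q n ≠ ⊤ := fun n => measure_ne_top _ _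
  have hcmono : ∀ n, c n ≤ c (n + 1) := by
    intro n; rw [hcs]; exact hF1 _ _
  have hhalf : ∀ n, q (n + 1) < q n / 2 := by
    intro n
    have := hF2 (n + 1) (c n)
    rw [← hcs] at this
    exact (lt_min_iff.1 this).1
  have hqε : ∀ n, q n < εe n := by
    intro n
    cases n with
    | zero =>
      have := hF2 0 0
      exact (lt_min_iff.1 this).2
    | succ k =>
      have := hF2 (k + 1) (c k)
      rw [← hcs] at this
      exact (lt_min_iff.1 this).2
  -- real versions
  set qr : ℕ → ℝ := fun n => (q n).toReal with hqr
  have hqrpos : ∀ n, 0 < qr n := fun n => ENNReal.toReal_pos (hq0 n) (hqtop n)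
  set y : ℕ → ℝ := fun n => (1 / 2) ^ n / qr n with hy
  have hypos : ∀ n, 0 < y n := fun n => div_pos (pow_pos (by norm_num) n) (hqrpos n)
  have hqrlt : ∀ n, qr n < (1 / 2) ^ n / R n := by
    intro n
    have := hqε n
    rw [hεe] at this
    exact (ENNReal.lt_ofReal_iff_toReal_lt (hqtop n)).1 this
  have hyR : ∀ n, R n ≤ y n := by
    intro n
    rw [hy]
    rw [le_div_iff₀ (hqrpos n)]
    have := (lt_div_iff₀ (hRpos n)).1 (hqrlt n)
    nlinarith [this]
  have huy : ∀ n, 1 / qr n ≤ uhat (y n) := by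
    intro n
    have h1 := hR2 n (y n) (hyR n)
    have h2 := (le_div_iff₀ (hypos n)).1 h1
    have h3 : (2 : ℝ) ^ n * y n = 1 / qr n := by
      have h4 : (2 : ℝ) ^ n * (1 / 2) ^ n = 1 := by
        rw [← mul_pow]; norm_num
      show (2 : ℝ) ^ n * ((1 / 2) ^ n / qr n) = 1 / qr n
      rw [← mul_div_assoc, h4]
    linarith [h3 ▸ h2]
  have hyq : ∀ n, y n * qr n = (1 / 2) ^ n := by
    intro n
    exact div_mul_cancel₀ _ (ne_of_gt (hqrpos n))
  -- the sets
  set B : ℕ → Set Ω := fun n => {ω | c n < W ω} with hB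
  have hBmeas : ∀ n, MeasurableSet (B n) :=
    fun n => measurableSet_lt measurable_const hWmeas
  have hcmono' : Monotone c := monotone_nat_of_le_succ hcmono
  have hBanti : ∀ m n, m ≤ n → B n ⊆ B m := by
    intro m n hmn ω hω
    exact lt_of_le_of_lt (hcmono' hmn) hω
  set A : ℕ → Set Ω := fun n => B n \ B (n + 1) with hA
  have hAmeas : ∀ n, MeasurableSet (A n) := fun n => (hBmeas n).diff (hBmeas (n + 1))
  have hAdisj : ∀ m n, m ≠ n → ∀ ω, ω ∈ A m → ω ∉ A n := by
    intro m n hmn ω hm hn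
    rcases lt_or_gt_of_ne hmn with h | h
    · exact hm.2 (hBanti (m + 1) n h hn.1)
    · exact hn.2 (hBanti (n + 1) m h hm.1)
  have hPA : ∀ n, P (A n) = q n - q (n + 1) := fun n =>
    measure_diff (hBanti n (n + 1) n.le_succ) (hBmeas (n + 1)).nullMeasurableSet
      (measure_ne_top _ _)
  have hPA_le : ∀ n, P (A n) ≤ q n := fun n => measure_mono Set.diff_subset
  have hPA_ge : ∀ n, q n / 2 ≤ P (A n) := by
    intro n
    rw [hPA n]
    calc q n / 2 = q n - q n / 2 := (ENNReal.sub_half (hqtop n)).symm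
      _ ≤ q n - q (n + 1) := tsub_le_tsub_left (hhalf n).le _
  -- the random variable
  set S : Ω → ℝ≥0∞ :=
    fun ω => ∑' n, (A n).indicator (fun _ => ENNReal.ofReal (y n)) ω with hS
  have hSmeas : Measurable S :=
    Measurable.ennreal_tsum fun n => measurable_const.indicator (hAmeas n)
  have hSmem : ∀ n ω, ω ∈ A n → S ω = ENNReal.ofReal (y n) := by
    intro n ω hω
    have h1 : S ω = (A n).indicator (fun _ => ENNReal.ofReal (y n)) ω := by
      apply tsum_eq_single
      intro m hm
      exact Set.indicator_of_notMem (hAdisj n m (Ne.symm hm) ω hω) _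
    rw [h1, Set.indicator_of_mem hω]
  have hSnot : ∀ ω, (∀ n, ω ∉ A n) → S ω = 0 := by
    intro ω h
    rw [hS]
    have h1 : ∀ m : ℕ, (A m).indicator (fun _ => ENNReal.ofReal (y m)) ω = 0 :=
      fun m => Set.indicator_of_notMem (h m) _
    simp only [h1, tsum_zero]
  set X : Ω → ℝ := fun ω => (S ω).toReal with hX
  have hXmeas : Measurable X := hSmeas.ennreal_toReal
  have hXmem : ∀ n ω, ω ∈ A n → X ω = y n := by
    intro n ω hω
    rw [hX]
    simp only
    rw [hSmem n ω hω, ENNReal.toReal_ofReal (hypos n).le]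
  have hXnot : ∀ ω, (∀ n, ω ∉ A n) → X ω = 0 := by
    intro ω h
    rw [hX]
    simp only
    rw [hSnot ω h, ENNReal.toReal_zero]
  -- the norm identity
  have hnorm : ∀ ω, (‖X ω‖₊ : ℝ≥0∞) = S ω := by
    intro ω
    by_cases h : ∃ n, ω ∈ A n
    · obtain ⟨n, hn⟩ := h
      rw [hXmem n ω hn, hSmem n ω hn]; exact Real.enorm_eq_ofReal (hypos n).le
    · push_neg at h
      rw [hXnot ω h, hSnot ω h]
      simp
  -- integrability of X
  have hSint : ∫⁻ ω, S ω ∂P ≠ ⊤ := by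
    rw [hS]
    rw [lintegral_tsum (fun n => (measurable_const.indicator (hAmeas n)).aemeasurable)]
    have hterm : ∀ n, ∫⁻ ω, (A n).indicator (fun _ => ENNReal.ofReal (y n)) ω ∂P
        ≤ ENNReal.ofReal ((1 / 2) ^ n) := by
      intro n
      rw [lintegral_indicator_const (hAmeas n)]
      calc ENNReal.ofReal (y n) * P (A n)
          ≤ ENNReal.ofReal (y n) * q n := mul_le_mul_right (hPA_le n) _
        _ = ENNReal.ofReal (y n) * ENNReal.ofReal (qr n) := by
            rw [hqr]; simp only; rw [ENNReal.ofReal_toReal (hqtop n)]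
        _ = ENNReal.ofReal (y n * qr n) := (ENNReal.ofReal_mul (hypos n).le).symm
        _ = ENNReal.ofReal ((1 / 2) ^ n) := by rw [hyq n]
    refine ne_top_of_le_ne_top ?_ (ENNReal.tsum_le_tsum hterm)
    have hgeo : ∑' n : ℕ, ENNReal.ofReal ((1 / 2 : ℝ) ^ n)
        = (1 - ENNReal.ofReal (1 / 2))⁻¹ := by
      have h1 : ∀ n : ℕ, ENNReal.ofReal ((1 / 2 : ℝ) ^ n) = ENNReal.ofReal (1 / 2) ^ n :=
        fun n => ENNReal.ofReal_pow (by norm_num) n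
      simp_rw [h1]
      exact ENNReal.tsum_geometric _
    rw [hgeo]
    refine ENNReal.inv_ne_top.2 ?_
    have h2 : ENNReal.ofReal (1 / 2) < 1 := ENNReal.ofReal_lt_one.2 (by norm_num)
    exact (tsub_pos_of_lt h2).ne'
  have hXint : Integrable X P := by
    refine ⟨hXmeas.aestronglyMeasurable, ?_⟩
    rw [hasFiniteIntegral_def]
    have : ∫⁻ ω, ‖X ω‖ₑ ∂P = ∫⁻ ω, S ω ∂P := lintegral_congr hnorm
    rw [this]
    exact lt_top_iff_ne_top.2 hSint
  refine ⟨X, hXint, 1, one_pos, ?_⟩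
  intro hint
  have hfin : ∫⁻ ω, (‖uhat (1 * X ω)‖₊ : ℝ≥0∞) ∂P < ⊤ := (hasFiniteIntegral_def _ _).1 hint.2
  simp only [one_mul] at hfin
  -- lower bound
  have hlow : ∀ N : ℕ, (N : ℝ≥0∞) * 2⁻¹ ≤ ∫⁻ ω, (‖uhat (X ω)‖₊ : ℝ≥0∞) ∂P := by
    intro N
    have hpt : ∀ ω, (∑ n ∈ Finset.range N,
        (A n).indicator (fun _ => ENNReal.ofReal (uhat (y n))) ω)
        ≤ (‖uhat (X ω)‖₊ : ℝ≥0∞) := by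
      intro ω
      by_cases h : ∃ n ∈ Finset.range N, ω ∈ A n
      · obtain ⟨n, hnN, hn⟩ := h
        rw [Finset.sum_eq_single_of_mem n hnN
          (fun m _ hmn => Set.indicator_of_notMem (hAdisj n m (Ne.symm hmn) ω hn) _)]
        rw [Set.indicator_of_mem hn, hXmem n ω hn]
        exact Real.ofReal_le_enorm _
      · push_neg at h
        rw [Finset.sum_eq_zero (fun m hm => Set.indicator_of_notMem (h m hm) _)]
        exact zero_le
    calc (N : ℝ≥0∞) * 2⁻¹
        = ∑ _n ∈ Finset.range N, (2⁻¹ : ℝ≥0∞) := by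
          rw [Finset.sum_const, Finset.card_range, nsmul_eq_mul]
      _ ≤ ∑ n ∈ Finset.range N, ENNReal.ofReal (uhat (y n)) * P (A n) := by
          refine Finset.sum_le_sum fun n _ => ?_
          have h1 : (q n)⁻¹ ≤ ENNReal.ofReal (uhat (y n)) := by
            have h2 : ENNReal.ofReal (1 / qr n) ≤ ENNReal.ofReal (uhat (y n)) :=
              ENNReal.ofReal_le_ofReal (huy n)
            rwa [one_div, ENNReal.ofReal_inv_of_pos (hqrpos n),
              ENNReal.ofReal_toReal (hqtop n)] at h2
          calc (2⁻¹ : ℝ≥0∞) = (q n)⁻¹ * (q n / 2) := by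
                rw [div_eq_mul_inv, ← mul_assoc,
                  ENNReal.inv_mul_cancel (hq0 n) (hqtop n), one_mul]
            _ ≤ ENNReal.ofReal (uhat (y n)) * P (A n) := mul_le_mul' h1 (hPA_ge n)
      _ = ∑ n ∈ Finset.range N,
            ∫⁻ ω, (A n).indicator (fun _ => ENNReal.ofReal (uhat (y n))) ω ∂P := by
          refine Finset.sum_congr rfl fun n _ => ?_
          rw [lintegral_indicator_const (hAmeas n)]
      _ = ∫⁻ ω, ∑ n ∈ Finset.range N,
            (A n).indicator (fun _ => ENNReal.ofReal (uhat (y n))) ω ∂P :=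
          (lintegral_finset_sum _ (fun n _ => measurable_const.indicator (hAmeas n))).symm
      _ ≤ ∫⁻ ω, (‖uhat (X ω)‖₊ : ℝ≥0∞) ∂P := lintegral_mono hpt
  obtain ⟨N, hN⟩ := ENNReal.exists_nat_gt hfin.ne
  have h1 := hlow (2 * N)
  have heq : ((2 * N : ℕ) : ℝ≥0∞) * 2⁻¹ = (N : ℝ≥0∞) := by
    push_cast
    rw [mul_comm (2 : ℝ≥0∞), mul_assoc,
      ENNReal.mul_inv_cancel two_ne_zero ENNReal.ofNat_ne_top, mul_one]
  rw [heq] at h1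
  exact absurd (h1.trans_lt hN) (lt_irrefl _)
end
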